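/- Let $\lambda$ be a PV number of degree $n$ and $\sigma$ admissible, and let $\mathfrak{D}(\sigma)$ denote the set of gaps $y-x$ over all pairs of consecutive points $x<y$ of $\mathfrak{L}(\sigma)$. Then $\mathfrak{D}(\sigma)$ is a finite set. -/

import Mathlib

open Polynomial

/-- The quasilattice `𝔏(σ)` associated to conjugates `λ₁,…,λₙ` and vector `σ`:
all numbers `(Vᵀℓ)₁` with `ℓ ∈ ℤⁿ` and `|(Vᵀℓ)ⱼ| < σⱼ` for `2 ≤ j ≤ n`. -/
def quasiLattice (n : ℕ) [NeZero n] (lams : Fin n → ℂ) (σ : Fin n → ℝ) : Set ℝ :=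
  {x | ∃ l : Fin n → ℤ, ((x : ℂ) = ∑ i, (l i : ℂ) * lams 0 ^ (i : ℕ)) ∧
    ∀ j, j ≠ 0 → ‖∑ i, (l i : ℂ) * lams j ^ (i : ℕ)‖ < σ j}

/-- `σ` is admissible: `σ₁ = 0`, `σⱼ > 0` for `j ≥ 2`, and `σ` takes equal values on
complex-conjugate pairs of roots. -/
def IsAdmissible (n : ℕ) [NeZero n] (lams : Fin n → ℂ) (σ : Fin n → ℝ) : Prop :=
  σ 0 = 0 ∧ (∀ j, j ≠ 0 → 0 < σ j) ∧
  ∀ j k : Fin n, lams j = (starRingEnd ℂ) (lams k) → σ j = σ k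

/-- `lam` is a PV number of degree `n` with conjugates `lams` and minimal polynomial `Λ`:
`lam > 1` is a root of the monic irreducible integer polynomial `Λ` of degree `n`
whose complex roots are the `lams j`, and all conjugates other than `lam` have modulus `< 1`. -/
def IsPV (n : ℕ) [NeZero n] (lam : ℝ) (lams : Fin n → ℂ) (Λ : Polynomial ℤ) : Prop :=
  1 < lam ∧ lams 0 = lam ∧ Λ.Monic ∧ Λ.natDegree = n ∧ Irreducible Λ ∧
  Λ.map (Int.castRingHom ℂ) = ∏ j, (Polynomial.X - Polynomial.C (lams j)) ∧
  ∀ j, j ≠ 0 → ‖lams j‖ < 1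


section Aux
open Finset

lemma geom_bound {r : ℝ} (h0 : 0 ≤ r) (h1 : r < 1) (m : ℕ) :
    ∑ i ∈ range m, r ^ i ≤ (1 - r)⁻¹ := by
  have := Summable.sum_le_tsum (range m) (fun i _ => pow_nonneg h0 i)
    (summable_geometric_of_lt_one h0 h1)
  rwa [tsum_geometric_of_lt_one h0 h1] at this

lemma greedy (lam : ℝ) (hlam : 1 < lam) (C : ℕ) (hC : lam ≤ C) (K : ℕ) :
    ∀ m : ℕ, ∀ t : ℝ, 0 ≤ t → t < lam ^ (K + m) →
    ∃ c : ℕ → ℕ, (∀ k, c k ≤ C) ∧ (∀ k, k < K → c k = 0) ∧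
      (∑ k ∈ range (K + m), (c k : ℝ) * lam ^ k) ≤ t ∧
      t - lam ^ K < ∑ k ∈ range (K + m), (c k : ℝ) * lam ^ k := by
  intro m
  induction m with
  | zero =>
    intro t ht0 htlt
    refine ⟨fun _ => 0, fun k => Nat.zero_le _, fun k _ => rfl, by simp [ht0], ?_⟩
    simp only [Nat.cast_zero, zero_mul, Finset.sum_const_zero]
    simpa using sub_neg.mpr htlt
  | succ m ih =>
    intro t ht0 htlt
    have hpow : (0:ℝ) < lam ^ (K + m) := pow_pos (by linarith) _
    set q : ℕ := ⌊t / lam ^ (K + m)⌋₊ with hq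
    have hqle : (q : ℝ) * lam ^ (K + m) ≤ t := by
      rw [← le_div_iff₀ hpow]
      exact Nat.floor_le (div_nonneg ht0 hpow.le)
    have hqlt : t < ((q : ℝ) + 1) * lam ^ (K + m) := by
      rw [← div_lt_iff₀ hpow]
      exact Nat.lt_floor_add_one _
    have hqC : q ≤ C := by
      have h1 : (q : ℝ) ≤ t / lam ^ (K + m) := Nat.floor_le (div_nonneg ht0 hpow.le)
      have h2 : t / lam ^ (K + m) < lam := by
        rw [div_lt_iff₀ hpow, ← pow_succ']
        have : K + m + 1 = K + (m + 1) := by omega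
        rw [this]; exact htlt
      have h3 : (q : ℝ) < (C : ℝ) := lt_of_lt_of_le (h1.trans_lt h2) hC
      exact Nat.le_of_lt (by exact_mod_cast h3)
    obtain ⟨c', hc'C, hc'0, hle', hgt'⟩ := ih (t - (q : ℝ) * lam ^ (K + m))
      (by linarith) (by linarith)
    refine ⟨Function.update c' (K + m) q, ?_, ?_, ?_, ?_⟩
    · intro k
      rcases eq_or_ne k (K + m) with rfl | hk
      · simpa using hqC
      · simpa [Function.update_of_ne hk] using hc'C k
    · intro k hk
      have hk2 : k ≠ K + m := by omega
      simpa [Function.update_of_ne hk2] using hc'0 k hk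
    all_goals {
      have hsum : ∑ k ∈ range (K + (m + 1)), ((Function.update c' (K + m) q k : ℝ)) * lam ^ k
          = (∑ k ∈ range (K + m), (c' k : ℝ) * lam ^ k) + (q : ℝ) * lam ^ (K + m) := by
        have : K + (m + 1) = (K + m) + 1 := by omega
        rw [this, Finset.sum_range_succ]
        congr 1
        · refine Finset.sum_congr rfl fun k hk => ?_
          rw [Function.update_of_ne (by simp at hk; omega)]
        · simp
      rw [hsum]
      linarith
    }

lemma pow_rep (n : ℕ) [NeZero n] (lams : Fin n → ℂ) (Λ : Polynomial ℤ)
    (hm : Λ.Monic) (hdeg : Λ.natDegree = n)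
    (hprod : Λ.map (Int.castRingHom ℂ) = ∏ j, (X - C (lams j))) (k : ℕ) (j : Fin n) :
    ∑ i : Fin n, (((X ^ k %ₘ Λ).coeff i : ℂ)) * lams j ^ (i : ℕ) = lams j ^ k := by
  have hn : 0 < n := Nat.pos_of_ne_zero (NeZero.ne n)
  have hΛ1 : Λ ≠ 1 := by
    intro h; rw [h] at hdeg; simp at hdeg; omega
  have hdlt : (X ^ k %ₘ Λ).natDegree < n := by
    have := natDegree_modByMonic_lt (X ^ k) hm hΛ1
    omega
  have hroot : (Λ.map (Int.castRingHom ℂ)).eval (lams j) = 0 := by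
    rw [hprod, eval_prod]
    exact Finset.prod_eq_zero (Finset.mem_univ j) (by simp)
  have hmC : (Λ.map (Int.castRingHom ℂ)).Monic := hm.map _
  have key : ((X ^ k %ₘ Λ).map (Int.castRingHom ℂ)).eval (lams j) = lams j ^ k := by
    have h1 := modByMonic_add_div ((X : Polynomial ℂ) ^ k) (Λ.map (Int.castRingHom ℂ))
    have h2 : (X ^ k %ₘ Λ).map (Int.castRingHom ℂ)
        = (X : Polynomial ℂ) ^ k %ₘ Λ.map (Int.castRingHom ℂ) := by
      rw [map_modByMonic _ hm, Polynomial.map_pow, Polynomial.map_X]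
    rw [h2]
    have := congrArg (eval (lams j)) h1
    simpa [hroot] using this
  have hdlt' : ((X ^ k %ₘ Λ).map (Int.castRingHom ℂ)).natDegree < n :=
    lt_of_le_of_lt (natDegree_map_le) hdlt
  rw [eval_eq_sum_range' hdlt'] at key
  rw [← key, Fin.sum_univ_eq_sum_range (fun i => (((X ^ k %ₘ Λ).coeff i : ℂ)) * lams j ^ i)]
  exact Finset.sum_congr rfl (fun i _ => by simp)

lemma combo_rep (n : ℕ) [NeZero n] (lams : Fin n → ℂ) (Λ : Polynomial ℤ)
    (hm : Λ.Monic) (hdeg : Λ.natDegree = n)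
    (hprod : Λ.map (Int.castRingHom ℂ) = ∏ j, (X - C (lams j)))
    (c : ℕ → ℤ) (N : ℕ) (j : Fin n) :
    ∑ i : Fin n, ((∑ k ∈ range N, c k * (X ^ k %ₘ Λ).coeff i : ℤ) : ℂ) * lams j ^ (i : ℕ)
      = ∑ k ∈ range N, (c k : ℂ) * lams j ^ k := by
  calc ∑ i : Fin n, ((∑ k ∈ range N, c k * (X ^ k %ₘ Λ).coeff i : ℤ) : ℂ) * lams j ^ (i : ℕ)
      = ∑ i : Fin n, ∑ k ∈ range N,
          (c k : ℂ) * (((X ^ k %ₘ Λ).coeff i : ℂ) * lams j ^ (i : ℕ)) := by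
        refine Finset.sum_congr rfl fun i _ => ?_
        push_cast
        rw [Finset.sum_mul]
        exact Finset.sum_congr rfl fun k _ => by ring
    _ = ∑ k ∈ range N, (c k : ℂ) * ∑ i : Fin n,
          ((X ^ k %ₘ Λ).coeff i : ℂ) * lams j ^ (i : ℕ) := by
        rw [Finset.sum_comm]
        exact Finset.sum_congr rfl fun k _ => by rw [Finset.mul_sum]
    _ = ∑ k ∈ range N, (c k : ℂ) * lams j ^ k :=
        Finset.sum_congr rfl fun k _ => by rw [pow_rep n lams Λ hm hdeg hprod k j]

lemma quasiLattice_neg (n : ℕ) [NeZero n] (lams : Fin n → ℂ) (σ : Fin n → ℝ) {x : ℝ}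
    (hx : x ∈ quasiLattice n lams σ) : -x ∈ quasiLattice n lams σ := by
  obtain ⟨l, h1, h2⟩ := hx
  refine ⟨fun i => -l i, ?_, fun j hj => ?_⟩
  · push_cast
    simp only [neg_mul, Finset.sum_neg_distrib]
    push_cast at h1
    rw [← h1]
  · have : ∑ i : Fin n, ((-l i : ℤ) : ℂ) * lams j ^ (i : ℕ)
        = -∑ i : Fin n, (l i : ℂ) * lams j ^ (i : ℕ) := by
      push_cast
      simp [neg_mul, Finset.sum_neg_distrib]
    rw [this, norm_neg]
    exact h2 j hj

lemma quasiLattice_dense (n : ℕ) [NeZero n] (lam : ℝ) (lams : Fin n → ℂ) (Λ : Polynomial ℤ)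
    (hlam : 1 < lam) (h0 : lams 0 = lam)
    (hm : Λ.Monic) (hdeg : Λ.natDegree = n)
    (hprod : Λ.map (Int.castRingHom ℂ) = ∏ j, (X - C (lams j)))
    (hsmall : ∀ j, j ≠ 0 → ‖lams j‖ < 1)
    (σ : Fin n → ℝ) (hσpos : ∀ j, j ≠ 0 → 0 < σ j) :
    ∃ M : ℝ, 0 < M ∧ ∀ t : ℝ, ∃ x ∈ quasiLattice n lams σ, |x - t| < M := by
  have hne : (Finset.univ : Finset (Fin n)).Nonempty := ⟨0, mem_univ 0⟩
  obtain ⟨r, hr0, hr1, hrj⟩ : ∃ r : ℝ, 0 ≤ r ∧ r < 1 ∧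
      ∀ j, j ≠ 0 → ‖lams j‖ ≤ r := by
    refine ⟨Finset.univ.sup' hne (fun j => if j = 0 then 0 else ‖lams j‖),
      ?_, ?_, ?_⟩
    · have h := Finset.le_sup' (fun j : Fin n => if j = 0 then 0 else ‖lams j‖)
        (mem_univ (0 : Fin n))
      simp only [if_pos rfl] at h
      exact h
    · rw [Finset.sup'_lt_iff]
      intro j _
      by_cases hj : j = 0
      · simp [hj]
      · simpa [hj] using hsmall j hj
    · intro j hj
      have h := Finset.le_sup' (fun j : Fin n => if j = 0 then 0 else ‖lams j‖)
        (mem_univ j)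
      simp only [if_neg hj] at h
      exact h
  obtain ⟨ε, hε0, hεj⟩ : ∃ ε : ℝ, 0 < ε ∧ ∀ j, j ≠ 0 → ε ≤ σ j := by
    refine ⟨Finset.univ.inf' hne (fun j => if j = 0 then 1 else σ j), ?_, ?_⟩
    · rw [Finset.lt_inf'_iff]
      intro j _
      by_cases hj : j = 0
      · simp [hj]
      · simpa [hj] using hσpos j hj
    · intro j hj
      have h := Finset.inf'_le (fun j : Fin n => if j = 0 then 1 else σ j) (mem_univ j)
      simp only [if_neg hj] at h
      exact h
  set C : ℕ := ⌈lam⌉₊ with hCdef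
  have hC : lam ≤ C := Nat.le_ceil lam
  have hu : (0:ℝ) < 1 - r := by linarith
  obtain ⟨K, hK⟩ : ∃ K : ℕ, r ^ K < ε * (1 - r) / (C + 1) :=
    exists_pow_lt_of_lt_one (by positivity) hr1
  have hbound : ∀ (c : ℕ → ℕ), (∀ k, c k ≤ C) → (∀ k, k < K → c k = 0) → ∀ m : ℕ,
      ∀ j, j ≠ 0 → ‖∑ k ∈ range (K + m), (c k : ℂ) * lams j ^ k‖ < σ j := by
    intro c hcC hc0 m j hj
    have h1 : ‖∑ k ∈ range (K + m), (c k : ℂ) * lams j ^ k‖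
        ≤ ∑ k ∈ range (K + m), (c k : ℝ) * ‖lams j‖ ^ k := by
      refine (norm_sum_le _ _).trans (le_of_eq (Finset.sum_congr rfl fun k _ => ?_))
      simp [map_pow]
    have h2 : ∑ k ∈ range (K + m), (c k : ℝ) * ‖lams j‖ ^ k
        = ∑ k ∈ Finset.Ico K (K + m), (c k : ℝ) * ‖lams j‖ ^ k := by
      rw [Finset.range_eq_Ico, ← Finset.sum_Ico_consecutive _ (Nat.zero_le K) (Nat.le_add_right K m)]
      have : ∑ k ∈ Finset.Ico 0 K, (c k : ℝ) * ‖lams j‖ ^ k = 0 := by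
        refine Finset.sum_eq_zero fun k hk => ?_
        simp at hk
        simp [hc0 k hk]
      rw [this, zero_add]
    have h3 : ∑ k ∈ Finset.Ico K (K + m), (c k : ℝ) * ‖lams j‖ ^ k
        ≤ ∑ k ∈ Finset.Ico K (K + m), (C : ℝ) * r ^ k := by
      refine Finset.sum_le_sum fun k _ => ?_
      have hab : (0:ℝ) ≤ ‖lams j‖ := norm_nonneg _
      exact mul_le_mul (by exact_mod_cast hcC k) (pow_le_pow_left₀ hab (hrj j hj) k)
        (pow_nonneg hab k) (Nat.cast_nonneg C)
    have h4 : ∑ k ∈ Finset.Ico K (K + m), (C : ℝ) * r ^ k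
        ≤ (C : ℝ) * (r ^ K * (1 - r)⁻¹) := by
      rw [Finset.sum_Ico_eq_sum_range]
      simp only [add_tsub_cancel_left]
      have : ∑ i ∈ range m, (C : ℝ) * r ^ (K + i)
          = (C : ℝ) * (r ^ K * ∑ i ∈ range m, r ^ i) := by
        rw [Finset.mul_sum, Finset.mul_sum]
        exact Finset.sum_congr rfl fun i _ => by ring
      rw [this]
      have hg := geom_bound hr0 hr1 m
      have hrK : (0:ℝ) ≤ r ^ K := pow_nonneg hr0 K
      have hCnn : (0:ℝ) ≤ C := Nat.cast_nonneg C
      nlinarith [mul_le_mul_of_nonneg_left hg hrK]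
    have h5 : (C : ℝ) * (r ^ K * (1 - r)⁻¹) < ε := by
      rw [div_eq_mul_inv] at hK
      have hrK : (0:ℝ) ≤ r ^ K := pow_nonneg hr0 K
      have hinv : (0:ℝ) < ((C:ℝ) + 1)⁻¹ := by positivity
      have h6 : ((C:ℝ) + 1) * r ^ K < ε * (1 - r) := by
        have := mul_lt_mul_of_pos_right hK (by positivity : (0:ℝ) < (C:ℝ)+1)
        calc ((C:ℝ) + 1) * r ^ K = r ^ K * ((C:ℝ)+1) := by ring
          _ < ε * (1 - r) * ((C:ℝ)+1)⁻¹ * ((C:ℝ)+1) := this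
          _ = ε * (1 - r) := by field_simp
      have h7 : (C : ℝ) * r ^ K < ε * (1 - r) := by nlinarith
      calc (C : ℝ) * (r ^ K * (1 - r)⁻¹) = ((C:ℝ) * r ^ K) * (1 - r)⁻¹ := by ring
        _ < (ε * (1 - r)) * (1 - r)⁻¹ := by
            exact mul_lt_mul_of_pos_right h7 (by positivity)
        _ = ε := by field_simp
    calc ‖∑ k ∈ range (K + m), (c k : ℂ) * lams j ^ k‖
        ≤ ∑ k ∈ Finset.Ico K (K + m), (c k : ℝ) * ‖lams j‖ ^ k := by
          rw [← h2]; exact h1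
      _ ≤ (C : ℝ) * (r ^ K * (1 - r)⁻¹) := le_trans h3 h4
      _ < ε := h5
      _ ≤ σ j := hεj j hj
  have hmem : ∀ (c : ℕ → ℕ), (∀ k, c k ≤ C) → (∀ k, k < K → c k = 0) → ∀ m : ℕ,
      (∑ k ∈ range (K + m), (c k : ℝ) * lam ^ k) ∈ quasiLattice n lams σ := by
    intro c hcC hc0 m
    refine ⟨fun i => ∑ k ∈ range (K + m), (c k : ℤ) * (X ^ k %ₘ Λ).coeff i, ?_, ?_⟩
    · rw [combo_rep n lams Λ hm hdeg hprod (fun k => (c k : ℤ)) (K + m) 0]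
      rw [h0]
      push_cast
      rfl
    · intro j hj
      rw [combo_rep n lams Λ hm hdeg hprod (fun k => (c k : ℤ)) (K + m) j]
      have := hbound c hcC hc0 m j hj
      convert this using 3 <;> (push_cast; try rfl)
  refine ⟨lam ^ K, pow_pos (by linarith) K, fun t => ?_⟩
  rcases le_or_gt 0 t with ht | ht
  · obtain ⟨m0, hm0⟩ : ∃ m0 : ℕ, t < lam ^ m0 := pow_unbounded_of_one_lt t hlam
    have htlt : t < lam ^ (K + m0) :=
      hm0.trans_le (pow_le_pow_right₀ (by linarith) (Nat.le_add_left m0 K))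
    obtain ⟨c, hcC, hc0, hle, hgt⟩ := greedy lam hlam C hC K m0 t ht htlt
    refine ⟨_, hmem c hcC hc0 m0, ?_⟩
    rw [abs_lt]
    constructor <;> [linarith; linarith [pow_pos (lt_trans zero_lt_one hlam) K]]
  · obtain ⟨m0, hm0⟩ : ∃ m0 : ℕ, -t < lam ^ m0 := pow_unbounded_of_one_lt (-t) hlam
    have htlt : -t < lam ^ (K + m0) :=
      hm0.trans_le (pow_le_pow_right₀ (by linarith) (Nat.le_add_left m0 K))
    obtain ⟨c, hcC, hc0, hle, hgt⟩ := greedy lam hlam C hC K m0 (-t) (by linarith) htlt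
    refine ⟨-(∑ k ∈ range (K + m0), (c k : ℝ) * lam ^ k),
      quasiLattice_neg n lams σ (hmem c hcC hc0 m0), ?_⟩
    rw [abs_lt]
    constructor <;> [linarith [pow_pos (lt_trans zero_lt_one hlam) K]; linarith]


lemma lams_injective (n : ℕ) [NeZero n] (lams : Fin n → ℂ) (Λ : Polynomial ℤ)
    (hm : Λ.Monic) (hirr : Irreducible Λ)
    (hprod : Λ.map (Int.castRingHom ℂ) = ∏ j, (X - C (lams j))) :
    Function.Injective lams := by
  have hprim : Λ.IsPrimitive := hm.isPrimitive
  have hirrQ : Irreducible (Λ.map (Int.castRingHom ℚ)) :=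
    (Polynomial.IsPrimitive.Int.irreducible_iff_irreducible_map_cast hprim).mp hirr
  have hsepQ : (Λ.map (Int.castRingHom ℚ)).Separable := hirrQ.separable
  have hsepC : (Λ.map (Int.castRingHom ℂ)).Separable := by
    have h : Λ.map (Int.castRingHom ℂ) = (Λ.map (Int.castRingHom ℚ)).map (algebraMap ℚ ℂ) := by
      rw [Polynomial.map_map]
      congr 1
    rw [h]
    exact hsepQ.map
  rw [hprod] at hsepC
  exact separable_prod_X_sub_C_iff.mp hsepC

noncomputable def Tmap (n : ℕ) (lams : Fin n → ℂ) : (Fin n → ℝ) →ₗ[ℝ] (Fin n → ℂ) where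
  toFun v := fun j => ∑ i, (v i : ℂ) * lams j ^ (i : ℕ)
  map_add' v w := by
    funext j
    simp [add_mul, Finset.sum_add_distrib]
  map_smul' a v := by
    funext j
    simp only [RingHom.id_apply, Pi.smul_apply, smul_eq_mul, Complex.real_smul]
    push_cast
    rw [Finset.mul_sum]
    exact Finset.sum_congr rfl fun i _ => by ring

lemma Tmap_ker (n : ℕ) [NeZero n] (lams : Fin n → ℂ)
    (hinj : Function.Injective lams) :
    LinearMap.ker (Tmap n lams) = ⊥ := by
  have hn : 0 < n := Nat.pos_of_ne_zero (NeZero.ne n)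
  rw [LinearMap.ker_eq_bot']
  intro v hv
  set p : Polynomial ℂ := ∑ i : Fin n, C ((v i : ℂ)) * X ^ (i : ℕ) with hp
  have heval : ∀ j : Fin n, p.eval (lams j) = 0 := by
    intro j
    have := congrFun hv j
    simp only [Tmap, LinearMap.coe_mk, AddHom.coe_mk, Pi.zero_apply] at this
    rw [hp]
    simpa [eval_finset_sum] using this
  have hdeg : p.natDegree < Fintype.card (Fin n) := by
    rw [Fintype.card_fin]
    refine lt_of_le_of_lt (natDegree_sum_le_of_forall_le _ _ (fun i _ => ?_)) (?_ : n - 1 < n)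
    · exact le_trans (natDegree_C_mul_X_pow_le _ _) (by omega)
    · omega
  have hp0 : p = 0 := eq_zero_of_natDegree_lt_card_of_eval_eq_zero p hinj heval hdeg
  funext i0
  have hc := congrArg (fun q : Polynomial ℂ => q.coeff (i0 : ℕ)) hp0
  simp only [hp, finset_sum_coeff, coeff_C_mul, coeff_X_pow, coeff_zero, mul_ite, mul_one,
    mul_zero, Fin.val_eq_val, Finset.sum_ite_eq', mem_univ, if_pos] at hc
  simpa using hc

open Finset in

/-- Lemma `QL6` of the paper: the set `𝔇(σ)` of gaps between consecutive points of the
quasilattice `𝔏(σ)` of a PV number is finite. -/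
theorem quasiLattice_gaps_finite (n : ℕ) [NeZero n] (lam : ℝ) (lams : Fin n → ℂ)
    (Λ : Polynomial ℤ) (hPV : IsPV n lam lams Λ)
    (σ : Fin n → ℝ) (hσ : IsAdmissible n lams σ) :
    Set.Finite {d : ℝ | ∃ x y : ℝ, x ∈ quasiLattice n lams σ ∧ y ∈ quasiLattice n lams σ ∧
      x < y ∧ Set.Ioo x y ∩ quasiLattice n lams σ = ∅ ∧ d = y - x} := by
  obtain ⟨hlam, h0, hm, hdeg, hirr, hprod, hsmall⟩ := hPV
  obtain ⟨hσ0, hσpos, -⟩ := hσ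
  obtain ⟨M, hM0, hMdense⟩ := quasiLattice_dense n lam lams Λ hlam h0 hm hdeg hprod hsmall σ hσpos
  have hinj := lams_injective n lams Λ hm hirr hprod
  have hker := Tmap_ker n lams hinj
  set B' : ℝ := 2 * M + ∑ j, 2 * |σ j| with hB'
  have hsum0 : (0:ℝ) ≤ ∑ j, 2 * |σ j| := Finset.sum_nonneg fun j _ => by positivity
  have hB'0 : 0 ≤ B' := by rw [hB']; linarith
  have hce := LinearMap.isClosedEmbedding_of_injective hker
  have hcomp : IsCompact ((Tmap n lams) ⁻¹' Metric.closedBall 0 B') :=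
    hce.isCompact_preimage (isCompact_closedBall _ _)
  obtain ⟨R, hR⟩ := hcomp.isBounded.subset_closedBall 0
  have hAfin : Set.Finite {l : Fin n → ℤ | ∀ i, -⌈R⌉ ≤ l i ∧ l i ≤ ⌈R⌉} := by
    refine Set.Finite.subset (Set.finite_Icc (fun _ : Fin n => -⌈R⌉) (fun _ => ⌈R⌉)) ?_
    intro l hl
    rw [Set.mem_Icc]
    exact ⟨fun i => (hl i).1, fun i => (hl i).2⟩
  refine Set.Finite.subset (hAfin.image
    (fun l : Fin n → ℤ => (∑ i, (l i : ℂ) * lams 0 ^ (i : ℕ)).re)) ?_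
  rintro d ⟨x, y, hx, hy, hxy, hIoo, rfl⟩
  obtain ⟨lx, hlx1, hlx2⟩ := hx
  obtain ⟨ly, hly1, hly2⟩ := hy
  set l : Fin n → ℤ := fun i => ly i - lx i with hl
  have hsub : ∀ j : Fin n, ∑ i, (l i : ℂ) * lams j ^ (i : ℕ)
      = (∑ i, (ly i : ℂ) * lams j ^ (i : ℕ)) - ∑ i, (lx i : ℂ) * lams j ^ (i : ℕ) := by
    intro j
    rw [← Finset.sum_sub_distrib]
    refine Finset.sum_congr rfl fun i _ => ?_
    rw [hl]
    push_cast
    ring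
  have hdl : ((y - x : ℝ) : ℂ) = ∑ i, (l i : ℂ) * lams 0 ^ (i : ℕ) := by
    rw [hsub 0, ← hlx1, ← hly1]
    push_cast
    ring
  have hgap : y - x ≤ 2 * M := by
    by_contra hcon
    push_neg at hcon
    obtain ⟨z, hz, hzd⟩ := hMdense ((x + y) / 2)
    rw [abs_lt] at hzd
    exact (Set.eq_empty_iff_forall_notMem.mp hIoo z)
      ⟨⟨by linarith [hzd.1], by linarith [hzd.2]⟩, hz⟩
  have hTv : (Tmap n lams) (fun i => ((l i : ℝ))) ∈ Metric.closedBall (0 : Fin n → ℂ) B' := by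
    rw [Metric.mem_closedBall, dist_zero_right]
    rw [pi_norm_le_iff_of_nonneg hB'0]
    intro j
    have hcast : (Tmap n lams) (fun i => ((l i : ℝ))) j = ∑ i, (l i : ℂ) * lams j ^ (i : ℕ) := by
      simp only [Tmap, LinearMap.coe_mk, AddHom.coe_mk]
      push_cast
      rfl
    rw [hcast]
    by_cases hj : j = 0
    · subst hj
      rw [← hdl, Complex.norm_real, Real.norm_eq_abs, abs_of_pos (by linarith : (0:ℝ) < y - x), hB']
      linarith
    · rw [hsub j]
      have h1 := hly2 j hj
      have h2 := hlx2 j hj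
      have h3 := norm_sub_le (∑ i, (ly i : ℂ) * lams j ^ (i : ℕ))
        (∑ i, (lx i : ℂ) * lams j ^ (i : ℕ))
      have h4 : 2 * |σ j| ≤ ∑ j, 2 * |σ j| :=
        Finset.single_le_sum (f := fun j => 2 * |σ j|) (fun j _ => by positivity) (mem_univ j)
      have h5 : σ j ≤ |σ j| := le_abs_self _
      rw [hB']
      linarith [h3]
  have hvmem := hR hTv
  rw [Metric.mem_closedBall, dist_zero_right] at hvmem
  have hli : ∀ i, -⌈R⌉ ≤ l i ∧ l i ≤ ⌈R⌉ := by
    intro i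
    have h1 : |((l i : ℝ))| ≤ R := by
      refine le_trans ?_ hvmem
      simpa using norm_le_pi_norm (fun i => ((l i : ℝ))) i
    rw [abs_le] at h1
    have hceil := Int.le_ceil R
    constructor
    · have h2 : ((-⌈R⌉ : ℤ) : ℝ) ≤ ((l i : ℤ) : ℝ) := by push_cast; linarith [h1.1]
      exact_mod_cast h2
    · have h2 : ((l i : ℤ) : ℝ) ≤ ((⌈R⌉ : ℤ) : ℝ) := by push_cast; linarith [h1.2]
      exact_mod_cast h2
  refine ⟨l, hli, ?_⟩
  show (∑ i, (l i : ℂ) * lams 0 ^ (i : ℕ)).re = y - x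
  rw [← hdl, Complex.ofReal_re]

end Aux
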